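/- Vector EMCP identity: for x ∈ ℝ^N, w ∈ ℝ^N with w_n > 0, and γ > 0, the minimum over ω ∈ ℝ^N with ω_n ≥ 0 of ∑_n ω_n|x_n| + (γ/2)‖ω − w‖₂² equals ∑_n Ω_{γ,w_n}(x_n), where Ω_{γ,w}(x) = w|x| − x²/(2γ) if |x| ≤ γw and γw²/2 otherwise. -/
import Mathlib


noncomputable def mcp (γ w x : ℝ) : ℝ :=
  if |x| ≤ γ * w then w * |x| - x ^ 2 / (2 * γ) else γ * w ^ 2 / 2

lemma mcp_le (γ w x ω : ℝ) (hγ : 0 < γ) (hω : 0 ≤ ω) :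
    mcp γ w x ≤ ω * |x| + (γ / 2) * (ω - w) ^ 2 := by
  unfold mcp
  have ha : 0 ≤ |x| := abs_nonneg x
  rw [← sq_abs x]
  revert ha
  generalize |x| = a
  intro ha
  split_ifs with h
  · have key : ω * a + γ / 2 * (ω - w) ^ 2 - (w * a - a ^ 2 / (2 * γ))
        = (γ * (ω - w) + a) ^ 2 / (2 * γ) := by
      field_simp; ring
    have h2 : (0:ℝ) ≤ (γ * (ω - w) + a) ^ 2 / (2 * γ) :=
      div_nonneg (sq_nonneg _) (by linarith)
    linarith
  · push_neg at h
    nlinarith [mul_nonneg hω (by linarith : (0:ℝ) ≤ a - γ * w),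
      mul_nonneg hγ.le (sq_nonneg ω)]

lemma mcp_eq (γ w x : ℝ) (hγ : 0 < γ) (hw : 0 < w) :
    mcp γ w x = max (w - |x| / γ) 0 * |x|
      + (γ / 2) * (max (w - |x| / γ) 0 - w) ^ 2 := by
  unfold mcp
  have ha : 0 ≤ |x| := abs_nonneg x
  rw [← sq_abs x]
  revert ha
  generalize |x| = a
  intro ha
  split_ifs with h
  · have hmax : max (w - a / γ) 0 = w - a / γ := by
      apply max_eq_left
      have : a / γ ≤ w := (div_le_iff₀' hγ).mpr h
      linarith
    rw [hmax]
    field_simp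
    ring
  · push_neg at h
    have hmax : max (w - a / γ) 0 = 0 := by
      apply max_eq_right
      have : w ≤ a / γ := (le_div_iff₀' hγ).mpr h.le
      linarith
    rw [hmax]
    ring

theorem stmt6 (N : ℕ) (x w : Fin N → ℝ) (γ : ℝ) (hγ : 0 < γ)
    (hw : ∀ n, 0 < w n) :
    IsLeast {s : ℝ | ∃ ω : Fin N → ℝ, (∀ n, 0 ≤ ω n) ∧
        s = (∑ n, ω n * |x n|) + (γ / 2) * ∑ n, (ω n - w n) ^ 2}
      (∑ n, mcp γ (w n) (x n)) := by
  constructor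
  · refine ⟨fun n => max (w n - |x n| / γ) 0, fun n => le_max_right _ _, ?_⟩
    rw [Finset.mul_sum, ← Finset.sum_add_distrib]
    exact Finset.sum_congr rfl fun n _ => mcp_eq γ (w n) (x n) hγ (hw n)
  · rintro s ⟨ω, hω, rfl⟩
    rw [Finset.mul_sum, ← Finset.sum_add_distrib]
    exact Finset.sum_le_sum fun n _ => mcp_le γ (w n) (x n) (ω n) hγ (hω n)
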